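/- Fix integers d, m ≥ 1 and constants δ ∈ (0,1), K > 0, K₀' > 0, H̄ ≥ 0, N' > 0, L > 0. Set C'' = [−K₀', K₀'] × 𝕊_{δ/2} and B'' = [−2K₀', 2K₀'] × 𝕊_{δ/4}. Let λ₁,…,λ_m : 𝕊_{δ/4} → ℝ be Lipschitz continuous with constant L. Let H : ℝ^{d+1} × Sym_d(ℝ) → ℝ satisfy: (a) |H(u', y) − H(v', y)| ≤ N'|u' − v'| for all u', v' ∈ ℝ^{d+1} and all symmetric d×d matrices y; (b) for every (u', y) there exists (f, l) ∈ C'' with (H̄ + K + |u'|) f + tr(l y) = H(u', y). For (u', y) define B(u', y) = { (f, l) ∈ B'' : (H̄ + K + |u'|) f + tr(l y) ≤ H(u', y) } (a nonempty compact set), and for z ∈ ℝ^m define 𝒢(u', y, z) = max over (f, l) ∈ B(u', y) of [ (H̄ + K + |u'|) f + Σ_{k=1}^m λ_k(l) z_k ], and cH(u', z) = inf over symmetric y of 𝒢(u', y, z). Then there exist constants N > 0 and ε₀ > 0, depending only on d, m, δ, K₀', N', L, H̄ and K, such that for all u', v' ∈ ℝ^{d+1} with |v'| ≤ ε₀, all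 z ∈ ℝ^m, and all symmetric y: 𝒢(u'+v', y, z) ≤ 𝒢(u', y, z) + N|v'|(1 + |u'| + |z|); consequently |cH(u'+v', z) − cH(u', z)| ≤ N|v'|(1 + |u'| + |z|) whenever |v'| ≤ ε₀. -/

import Mathlib

open scoped BigOperators NNReal

attribute [local instance] Matrix.frobeniusNormedAddCommGroup Matrix.frobeniusNormedSpace

noncomputable section

/-- `𝕊_θ`: symmetric `d×d` matrices with `θ|ξ|² ≤ ⟨aξ,ξ⟩ ≤ θ⁻¹|ξ|²`. -/
def Sdelta (d : ℕ) (θ : ℝ) : Set (Matrix (Fin d) (Fin d) ℝ) :=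
  {a | a.IsHermitian ∧ ∀ ξ : Fin d → ℝ,
    θ * (∑ i, ξ i ^ 2) ≤ (∑ i, ∑ j, a i j * ξ j * ξ i) ∧
      (∑ i, ∑ j, a i j * ξ j * ξ i) ≤ θ⁻¹ * (∑ i, ξ i ^ 2)}

/-- Frobenius norm of a matrix. -/
def frobNorm (d : ℕ) (M : Matrix (Fin d) (Fin d) ℝ) : ℝ :=
  Real.sqrt (∑ i, ∑ j, (M i j) ^ 2)

/-- Euclidean norm of a vector. -/
def eunorm {n : ℕ} (u : Fin n → ℝ) : ℝ :=
  Real.sqrt (∑ i, u i ^ 2)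

/-- Pucci's operator `P₀(M) = 2δ⁻¹ Σ λ_k⁺(M) − (δ/2) Σ λ_k⁻(M)` (for Hermitian `M`;
junk value `0` otherwise). -/
def pucci (d : ℕ) (δ : ℝ) (M : Matrix (Fin d) (Fin d) ℝ) : ℝ :=
  if h : M.IsHermitian then
    2 * δ⁻¹ * (∑ k, max (h.eigenvalues k) 0) - (δ / 2) * (∑ k, max (-(h.eigenvalues k)) 0)
  else 0

/-- The set `B(u',y) ⊆ B'' = [−2K₀', 2K₀'] × 𝕊_{δ/4}` of pairs `(f,l)` with
`(H̄ + K + |u'|) f + tr(l y) ≤ H(u', y)`. -/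
def Bset (d : ℕ) (δ K₀' Hbar K : ℝ)
    (H : (Fin (d + 1) → ℝ) → Matrix (Fin d) (Fin d) ℝ → ℝ)
    (u' : Fin (d + 1) → ℝ) (y : Matrix (Fin d) (Fin d) ℝ) :
    Set (ℝ × Matrix (Fin d) (Fin d) ℝ) :=
  {p | |p.1| ≤ 2 * K₀' ∧ p.2 ∈ Sdelta d (δ / 4) ∧
    (Hbar + K + eunorm u') * p.1 + Matrix.trace (p.2 * y) ≤ H u' y}

/-- `𝒢(u', y, z) = max over (f,l) ∈ B(u',y) of (H̄ + K + |u'|) f + Σ_k λ_k(l) z_k`. -/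
def Gmax (d m : ℕ) (δ K₀' Hbar K : ℝ)
    (H : (Fin (d + 1) → ℝ) → Matrix (Fin d) (Fin d) ℝ → ℝ)
    (lam : Fin m → Matrix (Fin d) (Fin d) ℝ → ℝ)
    (u' : Fin (d + 1) → ℝ) (y : Matrix (Fin d) (Fin d) ℝ) (z : Fin m → ℝ) : ℝ :=
  sSup {s : ℝ | ∃ p ∈ Bset d δ K₀' Hbar K H u' y,
    s = (Hbar + K + eunorm u') * p.1 + ∑ k, lam k p.2 * z k}

/-- `cH(u', z) = inf over symmetric y of 𝒢(u', y, z)`. -/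
def cHinf (d m : ℕ) (δ K₀' Hbar K : ℝ)
    (H : (Fin (d + 1) → ℝ) → Matrix (Fin d) (Fin d) ℝ → ℝ)
    (lam : Fin m → Matrix (Fin d) (Fin d) ℝ → ℝ)
    (u' : Fin (d + 1) → ℝ) (z : Fin m → ℝ) : ℝ :=
  sInf {s : ℝ | ∃ y : Matrix (Fin d) (Fin d) ℝ, y.IsHermitian ∧
    s = Gmax d m δ K₀' Hbar K H lam u' y z}

/-! Fix `y` and move `u'` to `u' + v'`. A pair `p = (f, l) ∈ B(u' + v', y)` violates the
constraint defining `B(u', y)` by at most `(N' + 2K₀')|v'|`, while the witness of (b) at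
`(u', y)`, with `f` lowered by `K₀'`, satisfies it with room `K K₀'`. The convex combination
giving the latter the weight `σ ≤ (N' + 2K₀')|v'| / (K K₀')` lies in `B(u', y)` and is
`σ`-close to `p`; since the objective is Lipschitz in `(f, l)` on `B''`, this bounds
`𝒢(u' + v', y, z) - 𝒢(u', y, z)`. Taking the infimum over `y` gives the same one-sided bound
for `cH`, and applying it at `(u' + v', -v')` with `|v'| ≤ 1` gives the other side. -/

lemma eunorm_eq_norm {n : ℕ} (u : Fin n → ℝ) : eunorm u = ‖WithLp.toLp 2 u‖ := by
  simp [EuclideanSpace.norm_eq, eunorm]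

lemma eunorm_nonneg {n : ℕ} (u : Fin n → ℝ) : 0 ≤ eunorm u := Real.sqrt_nonneg _

lemma eunorm_add_le {n : ℕ} (u v : Fin n → ℝ) : eunorm (u + v) ≤ eunorm u + eunorm v := by
  simpa only [eunorm_eq_norm, WithLp.toLp_add] using
    norm_add_le (WithLp.toLp 2 u) (WithLp.toLp 2 v)

lemma eunorm_neg {n : ℕ} (u : Fin n → ℝ) : eunorm (-u) = eunorm u := by
  simpa only [eunorm_eq_norm, WithLp.toLp_neg] using norm_neg (WithLp.toLp 2 u)

lemma abs_eunorm_add_sub_le {n : ℕ} (u v : Fin n → ℝ) :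
    |eunorm (u + v) - eunorm u| ≤ eunorm v := by
  simpa only [eunorm_eq_norm, WithLp.toLp_add, add_sub_cancel_left] using
    abs_norm_sub_norm_le (WithLp.toLp 2 (u + v)) (WithLp.toLp 2 u)

lemma abs_le_eunorm {n : ℕ} (u : Fin n → ℝ) (k : Fin n) : |u k| ≤ eunorm u := by
  simpa only [eunorm_eq_norm, Real.norm_eq_abs] using PiLp.norm_apply_le (WithLp.toLp 2 u) k

lemma frobNorm_eq_norm {d : ℕ} (M : Matrix (Fin d) (Fin d) ℝ) : frobNorm d M = ‖M‖ := by
  simp [Matrix.frobenius_norm_def, frobNorm, Real.sqrt_eq_rpow]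

section Sdelta

variable {d : ℕ} {θ : ℝ}

lemma Sdelta_anti {θ' : ℝ} (hθ' : 0 < θ') (h : θ' ≤ θ) : Sdelta d θ ⊆ Sdelta d θ' := by
  rintro a ⟨ha, hq⟩
  refine ⟨ha, fun ξ => ?_⟩
  have hξ : 0 ≤ ∑ i, ξ i ^ 2 := Finset.sum_nonneg fun i _ => sq_nonneg _
  have hinv : θ⁻¹ ≤ θ'⁻¹ := inv_anti₀ hθ' h
  exact ⟨(mul_le_mul_of_nonneg_right h hξ).trans (hq ξ).1,
    (hq ξ).2.trans (mul_le_mul_of_nonneg_right hinv hξ)⟩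

lemma convex_Sdelta : Convex ℝ (Sdelta d θ) := by
  rintro a ⟨ha, hqa⟩ b ⟨hb, hqb⟩ s t hs ht hst
  refine ⟨(ha.smul (IsSelfAdjoint.all s)).add (hb.smul (IsSelfAdjoint.all t)), fun ξ => ?_⟩
  have hform : ∑ i, ∑ j, (s • a + t • b) i j * ξ j * ξ i
      = s * ∑ i, ∑ j, a i j * ξ j * ξ i + t * ∑ i, ∑ j, b i j * ξ j * ξ i := by
    simp only [Finset.mul_sum, ← Finset.sum_add_distrib]
    refine Finset.sum_congr rfl fun i _ => Finset.sum_congr rfl fun j _ => ?_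
    simp only [Matrix.add_apply, Matrix.smul_apply, smul_eq_mul]
    ring
  rw [hform]
  obtain rfl : t = 1 - s := by linarith
  obtain ⟨ha₁, ha₂⟩ := hqa ξ
  obtain ⟨hb₁, hb₂⟩ := hqb ξ
  constructor
  · linarith [mul_le_mul_of_nonneg_left ha₁ hs, mul_le_mul_of_nonneg_left hb₁ ht]
  · linarith [mul_le_mul_of_nonneg_left ha₂ hs, mul_le_mul_of_nonneg_left hb₂ ht]

lemma abs_apply_le_of_mem_Sdelta (hθ : 0 < θ) {a : Matrix (Fin d) (Fin d) ℝ}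
    (ha : a ∈ Sdelta d θ) (i j : Fin d) : |a i j| ≤ θ⁻¹ := by
  obtain ⟨hsymm, hq⟩ := ha
  have hji : a j i = a i j := hsymm.apply i j
  -- polarization with the test vectors `e_i ± e_j`
  let ξ : ℝ → Fin d → ℝ := fun s k =>
    (if k = i then 1 else 0) + s * (if k = j then 1 else 0)
  have hform : ∀ s, ∑ k, ∑ l, a k l * ξ s l * ξ s k
      = a i i + 2 * s * a i j + s ^ 2 * a j j := by
    intro s
    simp only [ξ, mul_ite, mul_one, mul_zero, mul_add, add_mul, ite_mul, zero_mul,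
      Finset.sum_add_distrib, Finset.sum_ite_irrel, Finset.sum_ite_eq', Finset.mem_univ,
      ↓reduceIte, Finset.sum_const_zero, hji]
    ring
  have hnorm : ∀ s : ℝ, s ^ 2 = 1 → ∑ k, ξ s k ^ 2 ≤ 4 := by
    intro s hs
    simp only [ξ, mul_ite, mul_one, mul_zero, add_sq, ite_pow, one_pow, ne_eq,
      OfNat.ofNat_ne_zero, not_false_eq_true, zero_pow, ite_mul, zero_mul, hs,
      Finset.sum_add_distrib, Finset.sum_ite_eq', Finset.mem_univ, ↓reduceIte]
    split_ifs <;> nlinarith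
  have hθinv : 0 ≤ θ⁻¹ := inv_nonneg.mpr hθ.le
  have hpos : ∀ s, 0 ≤ θ * ∑ k, ξ s k ^ 2 := fun s => by positivity
  obtain ⟨hlo₁, hhi₁⟩ := hq (ξ 1)
  obtain ⟨hlo₂, hhi₂⟩ := hq (ξ (-1))
  rw [hform] at hlo₁ hhi₁ hlo₂ hhi₂
  have hb₁ := mul_le_mul_of_nonneg_left (hnorm 1 (by norm_num)) hθinv
  have hb₂ := mul_le_mul_of_nonneg_left (hnorm (-1) (by norm_num)) hθinv
  rw [abs_le]
  constructor <;> nlinarith [hpos 1, hpos (-1)]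

lemma frobNorm_le_of_mem_Sdelta (hθ : 0 < θ) {a : Matrix (Fin d) (Fin d) ℝ}
    (ha : a ∈ Sdelta d θ) : frobNorm d a ≤ d * θ⁻¹ := by
  have hentry : ∀ i j, a i j ^ 2 ≤ θ⁻¹ ^ 2 := fun i j =>
    sq_le_sq' (abs_le.mp (abs_apply_le_of_mem_Sdelta hθ ha i j)).1
      (abs_le.mp (abs_apply_le_of_mem_Sdelta hθ ha i j)).2
  rw [frobNorm, Real.sqrt_le_left (by positivity)]
  calc ∑ i, ∑ j, a i j ^ 2 ≤ ∑ _i : Fin d, ∑ _j : Fin d, θ⁻¹ ^ 2 :=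
        Finset.sum_le_sum fun i _ => Finset.sum_le_sum fun j _ => hentry i j
    _ = (d * θ⁻¹) ^ 2 := by
      simp only [Finset.sum_const, Finset.card_univ, Fintype.card_fin, nsmul_eq_mul]
      ring

lemma frobNorm_sub_le_of_mem_Sdelta (hθ : 0 < θ) {a b : Matrix (Fin d) (Fin d) ℝ}
    (ha : a ∈ Sdelta d θ) (hb : b ∈ Sdelta d θ) : frobNorm d (a - b) ≤ 2 * d * θ⁻¹ := by
  have := frobNorm_le_of_mem_Sdelta hθ ha
  have := frobNorm_le_of_mem_Sdelta hθ hb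
  rw [frobNorm_eq_norm] at *
  linarith [norm_sub_le a b]

end Sdelta

lemma abs_sum_mul_sub_sum_mul_le {α : Type*} {m : ℕ} (g : Fin m → α → ℝ) (a b : α)
    {r : ℝ} (h : ∀ k, |g k a - g k b| ≤ r) (z : Fin m → ℝ) :
    |∑ k, g k a * z k - ∑ k, g k b * z k| ≤ m * r * eunorm z := by
  rw [← Finset.sum_sub_distrib]
  calc |∑ k, (g k a * z k - g k b * z k)| ≤ ∑ k, |g k a - g k b| * |z k| := by
        simpa only [← sub_mul, abs_mul] using
          Finset.abs_sum_le_sum_abs (fun k => g k a * z k - g k b * z k) Finset.univ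
    _ ≤ ∑ _k : Fin m, r * eunorm z := Finset.sum_le_sum fun k _ =>
        mul_le_mul (h k) (abs_le_eunorm z k) (abs_nonneg _) ((abs_nonneg _).trans (h k))
    _ = m * r * eunorm z := by simp [mul_assoc]

lemma convex_comb_nonpos {a b γ κ : ℝ} (hγ : 0 ≤ γ) (hκ : 0 < κ) (ha : a ≤ γ)
    (hb : b ≤ -κ) :
    (1 - γ / (γ + κ)) * a + γ / (γ + κ) * b ≤ 0 := by
  have hsum : 0 < γ + κ := by linarith
  have : (1 - γ / (γ + κ)) * a + γ / (γ + κ) * b = (κ * a + γ * b) / (γ + κ) := by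
    field_simp
    ring
  rw [this]
  exact div_nonpos_of_nonpos_of_nonneg (by nlinarith) hsum.le

lemma abs_sub_le_of_forall_add_le {n : ℕ} (F : (Fin n → ℝ) → ℝ) {N r : ℝ} (hN : 0 ≤ N)
    (hr : 0 ≤ r) (h : ∀ w v, F (w + v) ≤ F w + N * eunorm v * (1 + eunorm w + r))
    (u v : Fin n → ℝ) (hv : eunorm v ≤ 1) :
    |F (u + v) - F u| ≤ 2 * N * eunorm v * (1 + eunorm u + r) := by
  have hback := h (u + v) (-v)
  rw [add_neg_cancel_right, eunorm_neg] at hback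
  have hgrowth : 1 + eunorm (u + v) + r ≤ 2 * (1 + eunorm u + r) := by
    linarith [eunorm_add_le u v, eunorm_nonneg u]
  have hNv : 0 ≤ N * eunorm v := mul_nonneg hN (eunorm_nonneg v)
  have hfwd := h u v
  have : 0 ≤ N * eunorm v * (1 + eunorm u + r) :=
    mul_nonneg hNv (by linarith [eunorm_nonneg u])
  rw [abs_sub_le_iff]
  constructor
  · linarith
  · linarith [mul_le_mul_of_nonneg_left hgrowth hNv]

def Gvalue {d m : ℕ} (Hbar K : ℝ) (lam : Fin m → Matrix (Fin d) (Fin d) ℝ → ℝ)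
    (w : Fin (d + 1) → ℝ) (z : Fin m → ℝ) (p : ℝ × Matrix (Fin d) (Fin d) ℝ) : ℝ :=
  (Hbar + K + eunorm w) * p.1 + ∑ k, lam k p.2 * z k

def GmaxLipConst (d m : ℕ) (δ K₀' Hbar K N' L : ℝ) : ℝ :=
  2 * K₀' + (4 * K₀' * (Hbar + K + 1) + m * L * (2 * d * (δ / 4)⁻¹)) *
    ((N' + 2 * K₀') / (K * K₀'))

section InfMax

variable {d m : ℕ} {δ K₀' Hbar K N' L : ℝ}
  {H : (Fin (d + 1) → ℝ) → Matrix (Fin d) (Fin d) ℝ → ℝ}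
  {lam : Fin m → Matrix (Fin d) (Fin d) ℝ → ℝ} {w : Fin (d + 1) → ℝ}
  {y : Matrix (Fin d) (Fin d) ℝ} {z : Fin m → ℝ}

lemma abs_Gvalue_sub_sum_le (hc : 0 ≤ Hbar + K) (hδ : 0 < δ) (hL : 0 ≤ L)
    (hlam : ∀ k, ∀ a ∈ Sdelta d (δ / 4), ∀ b ∈ Sdelta d (δ / 4),
      |lam k a - lam k b| ≤ L * frobNorm d (a - b))
    {p : ℝ × Matrix (Fin d) (Fin d) ℝ} (hp₁ : |p.1| ≤ 2 * K₀')
    (hp₂ : p.2 ∈ Sdelta d (δ / 4)) {a : Matrix (Fin d) (Fin d) ℝ}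
    (ha : a ∈ Sdelta d (δ / 4)) :
    |Gvalue Hbar K lam w z p - ∑ k, lam k a * z k|
      ≤ (Hbar + K + eunorm w) * (2 * K₀') + m * (L * (2 * d * (δ / 4)⁻¹)) * eunorm z := by
  have hcw : 0 ≤ Hbar + K + eunorm w := add_nonneg hc (eunorm_nonneg w)
  have hlin : |(Hbar + K + eunorm w) * p.1| ≤ (Hbar + K + eunorm w) * (2 * K₀') := by
    rw [abs_mul, abs_of_nonneg hcw]
    exact mul_le_mul_of_nonneg_left hp₁ hcw
  have hsum := abs_sum_mul_sub_sum_mul_le lam p.2 a (r := L * (2 * d * (δ / 4)⁻¹))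
    (fun k => (hlam k _ hp₂ _ ha).trans
      (mul_le_mul_of_nonneg_left (frobNorm_sub_le_of_mem_Sdelta (by positivity) hp₂ ha) hL)) z
  calc |Gvalue Hbar K lam w z p - ∑ k, lam k a * z k|
      = |(Hbar + K + eunorm w) * p.1 + (∑ k, lam k p.2 * z k - ∑ k, lam k a * z k)| := by
        rw [Gvalue, add_sub_assoc]
    _ ≤ _ := (abs_add_le _ _).trans (add_le_add hlin hsum)

lemma mem_Bset_of_abs_le {f : ℝ} {l : Matrix (Fin d) (Fin d) ℝ} (hf : |f| ≤ K₀')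
    (hl : l ∈ Sdelta d (δ / 4))
    (h : (Hbar + K + eunorm w) * f + Matrix.trace (l * y) ≤ H w y) :
    (f, l) ∈ Bset d δ K₀' Hbar K H w y :=
  ⟨by linarith [abs_nonneg f], hl, h⟩

lemma le_Gmax (hc : 0 ≤ Hbar + K) (hδ : 0 < δ) (hL : 0 ≤ L)
    (hlam : ∀ k, ∀ a ∈ Sdelta d (δ / 4), ∀ b ∈ Sdelta d (δ / 4),
      |lam k a - lam k b| ≤ L * frobNorm d (a - b))
    {p : ℝ × Matrix (Fin d) (Fin d) ℝ} (hp : p ∈ Bset d δ K₀' Hbar K H w y) :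
    Gvalue Hbar K lam w z p ≤ Gmax d m δ K₀' Hbar K H lam w y z := by
  refine le_csSup ⟨∑ k, lam k p.2 * z k
    + ((Hbar + K + eunorm w) * (2 * K₀') + m * (L * (2 * d * (δ / 4)⁻¹)) * eunorm z), ?_⟩
    ⟨p, hp, rfl⟩
  rintro _ ⟨q, ⟨hq₁, hq₂, -⟩, rfl⟩
  have := le_of_abs_le (abs_Gvalue_sub_sum_le (w := w) (z := z) hc hδ hL hlam hq₁ hq₂ hp.2.1)
  rw [Gvalue] at this
  linarith

lemma Gmax_le {c : ℝ} (hne : (Bset d δ K₀' Hbar K H w y).Nonempty)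
    (h : ∀ p ∈ Bset d δ K₀' Hbar K H w y, Gvalue Hbar K lam w z p ≤ c) :
    Gmax d m δ K₀' Hbar K H lam w y z ≤ c := by
  obtain ⟨p, hp⟩ := hne
  refine csSup_le ⟨_, p, hp, rfl⟩ ?_
  rintro _ ⟨q, hq, rfl⟩
  exact h q hq

lemma bddBelow_Gmax (hc : 0 ≤ Hbar + K) (hδ : 0 < δ) (hL : 0 ≤ L)
    (hlam : ∀ k, ∀ a ∈ Sdelta d (δ / 4), ∀ b ∈ Sdelta d (δ / 4),
      |lam k a - lam k b| ≤ L * frobNorm d (a - b))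
    (hne : ∀ y : Matrix (Fin d) (Fin d) ℝ, y.IsHermitian →
      (Bset d δ K₀' Hbar K H w y).Nonempty) :
    BddBelow {s | ∃ y : Matrix (Fin d) (Fin d) ℝ, y.IsHermitian ∧
      s = Gmax d m δ K₀' Hbar K H lam w y z} := by
  obtain ⟨a, ha⟩ := hne 0 Matrix.isHermitian_zero
  refine ⟨∑ k, lam k a.2 * z k
    - ((Hbar + K + eunorm w) * (2 * K₀') + m * (L * (2 * d * (δ / 4)⁻¹)) * eunorm z), ?_⟩
  rintro _ ⟨y, hy, rfl⟩
  obtain ⟨p, hp⟩ := hne y hy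
  have := abs_Gvalue_sub_sum_le (w := w) (z := z) hc hδ hL hlam hp.1 hp.2.1 ha.2.1
  linarith [neg_le_of_abs_le this, le_Gmax (z := z) hc hδ hL hlam hp]

lemma convex_comb_mem_Bset {p q : ℝ × Matrix (Fin d) (Fin d) ℝ} {σ : ℝ} (hσ₀ : 0 ≤ σ)
    (hσ₁ : σ ≤ 1) (hp₁ : |p.1| ≤ 2 * K₀') (hp₂ : p.2 ∈ Sdelta d (δ / 4))
    (hq₁ : |q.1| ≤ 2 * K₀') (hq₂ : q.2 ∈ Sdelta d (δ / 4))
    (hdefect : (1 - σ) * ((Hbar + K + eunorm w) * p.1 + Matrix.trace (p.2 * y) - H w y)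
      + σ * ((Hbar + K + eunorm w) * q.1 + Matrix.trace (q.2 * y) - H w y) ≤ 0) :
    (1 - σ) • p + σ • q ∈ Bset d δ K₀' Hbar K H w y := by
  have h1σ : 0 ≤ 1 - σ := by linarith
  refine ⟨abs_le.mpr (convex_Icc _ _ (abs_le.mp hp₁) (abs_le.mp hq₁) h1σ hσ₀ (by ring)),
    convex_Sdelta hp₂ hq₂ h1σ hσ₀ (by ring), ?_⟩
  simp only [Prod.fst_add, Prod.snd_add, Prod.smul_fst, Prod.smul_snd, smul_eq_mul,
    Matrix.add_mul, Matrix.smul_mul, Matrix.trace_add, Matrix.trace_smul]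
  linarith

lemma exists_mem_Bset_near (hK : 0 < K) (hK₀' : 0 < K₀') (hHbar : 0 ≤ Hbar)
    (hN' : 0 ≤ N') (hδ : 0 < δ) {v : Fin (d + 1) → ℝ}
    (hHv : H (w + v) y ≤ H w y + N' * eunorm v) {f₀ : ℝ} {l₀ : Matrix (Fin d) (Fin d) ℝ}
    (hf₀ : |f₀| ≤ K₀') (hl₀ : l₀ ∈ Sdelta d (δ / 4))
    (hH₀ : (Hbar + K + eunorm w) * f₀ + Matrix.trace (l₀ * y) ≤ H w y)
    {p : ℝ × Matrix (Fin d) (Fin d) ℝ} (hp : p ∈ Bset d δ K₀' Hbar K H (w + v) y) :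
    ∃ q ∈ Bset d δ K₀' Hbar K H w y,
      |p.1 - q.1| ≤ 4 * K₀' * ((N' + 2 * K₀') / (K * K₀') * eunorm v) ∧
      frobNorm d (p.2 - q.2)
        ≤ 2 * d * (δ / 4)⁻¹ * ((N' + 2 * K₀') / (K * K₀') * eunorm v) := by
  obtain ⟨hp₁, hp₂, hp₃⟩ := hp
  set γ := (N' + 2 * K₀') * eunorm v
  set κ := K * K₀'
  have hγ : 0 ≤ γ := mul_nonneg (by linarith) (eunorm_nonneg v)
  have hκ : 0 < κ := mul_pos hK hK₀'
  have hdefect_p : (Hbar + K + eunorm w) * p.1 + Matrix.trace (p.2 * y) - H w y ≤ γ := by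
    have hshift : (eunorm w - eunorm (w + v)) * p.1 ≤ eunorm v * (2 * K₀') := by
      refine (le_abs_self _).trans ?_
      rw [abs_mul, abs_sub_comm]
      exact mul_le_mul (abs_eunorm_add_sub_le w v) hp₁ (abs_nonneg _) (eunorm_nonneg v)
    linarith
  set q₀ : ℝ × Matrix (Fin d) (Fin d) ℝ := (f₀ - K₀', l₀)
  have hdefect_q₀ :
      (Hbar + K + eunorm w) * q₀.1 + Matrix.trace (q₀.2 * y) - H w y ≤ -κ := by
    have : 0 ≤ (Hbar + eunorm w) * K₀' :=
      mul_nonneg (add_nonneg hHbar (eunorm_nonneg w)) hK₀'.le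
    simp only [q₀]
    linarith
  have hq₀₁ : |q₀.1| ≤ 2 * K₀' := by
    simp only [q₀]
    linarith [abs_sub f₀ K₀', abs_of_pos hK₀']
  set σ := γ / (γ + κ)
  have hσ₀ : 0 ≤ σ := div_nonneg hγ (by linarith)
  have hσ₁ : σ ≤ 1 := div_le_one_of_le₀ (by linarith) (by linarith)
  have hσ : σ ≤ (N' + 2 * K₀') / (K * K₀') * eunorm v := by
    rw [div_mul_eq_mul_div]
    exact div_le_div_of_nonneg_left hγ hκ (by linarith)
  have hdiff : p - ((1 - σ) • p + σ • q₀) = σ • (p - q₀) := by module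
  refine ⟨(1 - σ) • p + σ • q₀,
    convex_comb_mem_Bset hσ₀ hσ₁ hp₁ hp₂ hq₀₁ hl₀
      (convex_comb_nonpos hγ hκ hdefect_p hdefect_q₀), ?_, ?_⟩
  · have h₁ : |p.1 - q₀.1| ≤ 4 * K₀' := (abs_sub _ _).trans (by linarith)
    rw [← Prod.fst_sub, hdiff, Prod.smul_fst, smul_eq_mul, abs_mul, abs_of_nonneg hσ₀,
      mul_comm]
    exact mul_le_mul h₁ hσ hσ₀ (by positivity)
  · have h₂ : frobNorm d (p.2 - q₀.2) ≤ 2 * d * (δ / 4)⁻¹ :=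
      frobNorm_sub_le_of_mem_Sdelta (by positivity) hp₂ hl₀
    rw [← Prod.snd_sub, hdiff, Prod.smul_snd, frobNorm_eq_norm, norm_smul,
      Real.norm_of_nonneg hσ₀, ← frobNorm_eq_norm, mul_comm]
    exact mul_le_mul h₂ hσ hσ₀ (by positivity)

lemma Gvalue_add_sub_Gvalue_le (hc : 0 ≤ Hbar + K) (v : Fin (d + 1) → ℝ)
    {p q : ℝ × Matrix (Fin d) (Fin d) ℝ} (hp₁ : |p.1| ≤ 2 * K₀') {r : ℝ}
    (hlam : ∀ k, |lam k p.2 - lam k q.2| ≤ r) :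
    Gvalue Hbar K lam (w + v) z p - Gvalue Hbar K lam w z q
      ≤ eunorm v * (2 * K₀') + (Hbar + K + eunorm w) * |p.1 - q.1| + m * r * eunorm z := by
  have hshift : (eunorm (w + v) - eunorm w) * p.1 ≤ eunorm v * (2 * K₀') := by
    refine (le_abs_self _).trans ?_
    rw [abs_mul]
    exact mul_le_mul (abs_eunorm_add_sub_le w v) hp₁ (abs_nonneg _) (eunorm_nonneg v)
  have hlin : (Hbar + K + eunorm w) * (p.1 - q.1) ≤ (Hbar + K + eunorm w) * |p.1 - q.1| :=
    mul_le_mul_of_nonneg_left (le_abs_self _) (add_nonneg hc (eunorm_nonneg w))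
  have hsum := le_of_abs_le (abs_sum_mul_sub_sum_mul_le lam p.2 q.2 hlam z)
  simp only [Gvalue]
  linarith

lemma GmaxLipConst_pos (hK : 0 < K) (hK₀' : 0 < K₀') (hHbar : 0 ≤ Hbar) (hN' : 0 ≤ N')
    (hδ : 0 < δ) (hL : 0 ≤ L) : 0 < GmaxLipConst d m δ K₀' Hbar K N' L := by
  unfold GmaxLipConst
  positivity

lemma Gmax_add_le (hK : 0 < K) (hK₀' : 0 < K₀') (hHbar : 0 ≤ Hbar) (hN' : 0 ≤ N')
    (hδ : 0 < δ) (hL : 0 ≤ L)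
    (hlam : ∀ k, ∀ a ∈ Sdelta d (δ / 4), ∀ b ∈ Sdelta d (δ / 4),
      |lam k a - lam k b| ≤ L * frobNorm d (a - b))
    {v : Fin (d + 1) → ℝ} (hHv : H (w + v) y ≤ H w y + N' * eunorm v)
    (hwit : ∀ u', ∃ (f : ℝ) (l : Matrix (Fin d) (Fin d) ℝ), |f| ≤ K₀' ∧
      l ∈ Sdelta d (δ / 4) ∧ (Hbar + K + eunorm u') * f + Matrix.trace (l * y) ≤ H u' y) :
    Gmax d m δ K₀' Hbar K H lam (w + v) y z ≤ Gmax d m δ K₀' Hbar K H lam w y z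
      + GmaxLipConst d m δ K₀' Hbar K N' L * eunorm v * (1 + eunorm w + eunorm z) := by
  have hc : 0 ≤ Hbar + K := by linarith
  obtain ⟨f₁, l₁, hf₁, hl₁, hH₁⟩ := hwit (w + v)
  obtain ⟨f₀, l₀, hf₀, hl₀, hH₀⟩ := hwit w
  refine Gmax_le ⟨_, mem_Bset_of_abs_le hf₁ hl₁ hH₁⟩ fun p hp => ?_
  obtain ⟨q, hq, hq₁, hq₂⟩ :=
    exists_mem_Bset_near hK hK₀' hHbar hN' hδ hHv hf₀ hl₀ hH₀ hp
  set ρ := (N' + 2 * K₀') / (K * K₀') * eunorm v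
  set D := 2 * d * (δ / 4)⁻¹
  set X := 1 + eunorm w + eunorm z
  have hval := Gvalue_add_sub_Gvalue_le (lam := lam) (w := w) (z := z) hc v hp.1
    (r := L * (D * ρ))
    fun k => (hlam k _ hp.2.1 _ hq.2.1).trans (mul_le_mul_of_nonneg_left hq₂ hL)
  have hGq := le_Gmax (z := z) hc hδ hL hlam hq
  have hv₀ := eunorm_nonneg v
  have hw₀ := eunorm_nonneg w
  have hz₀ := eunorm_nonneg z
  have hρ : 0 ≤ ρ := mul_nonneg (by positivity) hv₀
  have hX : 1 ≤ X := by linarith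
  have hwX : Hbar + K + eunorm w ≤ (Hbar + K + 1) * X := by
    nlinarith [mul_nonneg hc (add_nonneg hw₀ hz₀)]
  have h₁ : eunorm v * (2 * K₀') ≤ eunorm v * (2 * K₀') * X :=
    le_mul_of_one_le_right (by positivity) hX
  have h₂ : (Hbar + K + eunorm w) * |p.1 - q.1| ≤ (Hbar + K + 1) * X * (4 * K₀' * ρ) :=
    (mul_le_mul_of_nonneg_left hq₁ (by positivity)).trans
      (mul_le_mul_of_nonneg_right hwX (by positivity))
  have h₃ : m * (L * (D * ρ)) * eunorm z ≤ m * (L * (D * ρ)) * X :=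
    mul_le_mul_of_nonneg_left (by linarith) (by positivity)
  have hconst : GmaxLipConst d m δ K₀' Hbar K N' L * eunorm v * X
      = eunorm v * (2 * K₀') * X + (Hbar + K + 1) * X * (4 * K₀' * ρ)
        + m * (L * (D * ρ)) * X := by
    simp only [GmaxLipConst, ρ, D]
    ring
  linarith

lemma cHinf_add_le {v : Fin (d + 1) → ℝ} {e : ℝ}
    (hbdd : BddBelow {s | ∃ y : Matrix (Fin d) (Fin d) ℝ, y.IsHermitian ∧
      s = Gmax d m δ K₀' Hbar K H lam (w + v) y z})
    (h : ∀ y : Matrix (Fin d) (Fin d) ℝ, y.IsHermitian →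
      Gmax d m δ K₀' Hbar K H lam (w + v) y z ≤ Gmax d m δ K₀' Hbar K H lam w y z + e) :
    cHinf d m δ K₀' Hbar K H lam (w + v) z ≤ cHinf d m δ K₀' Hbar K H lam w z + e := by
  rw [← sub_le_iff_le_add]
  refine le_csInf ⟨_, 0, Matrix.isHermitian_zero, rfl⟩ ?_
  rintro _ ⟨y, hy, rfl⟩
  rw [sub_le_iff_le_add]
  exact (csInf_le hbdd ⟨y, hy, rfl⟩).trans (h y hy)

end InfMax

theorem cH_locally_lipschitz_general (d m : ℕ)
    (δ : ℝ) (hδ : δ ∈ Set.Ioo (0:ℝ) 1)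
    (K K₀' Hbar N' L : ℝ) (hK : 0 < K) (hK₀' : 0 < K₀') (hHbar : 0 ≤ Hbar)
    (hN' : 0 < N') (hL : 0 < L) :
    ∃ N : ℝ, 0 < N ∧ ∃ ε₀ : ℝ, 0 < ε₀ ∧
      ∀ (lam : Fin m → Matrix (Fin d) (Fin d) ℝ → ℝ),
        -- the `λ_k` are Lipschitz on `𝕊_{δ/4}` with constant `L`
        (∀ k : Fin m, ∀ a ∈ Sdelta d (δ / 4), ∀ b ∈ Sdelta d (δ / 4),
          |lam k a - lam k b| ≤ L * frobNorm d (a - b)) →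
      ∀ (H : (Fin (d + 1) → ℝ) → Matrix (Fin d) (Fin d) ℝ → ℝ),
        -- (a) `H` is Lipschitz in `u'` with constant `N'`
        (∀ (u' v' : Fin (d + 1) → ℝ) (y : Matrix (Fin d) (Fin d) ℝ), y.IsHermitian →
          |H u' y - H v' y| ≤ N' * eunorm (u' - v')) →
        -- (b) for every `(u', y)` there is `(f,l) ∈ C'' = [−K₀',K₀'] × 𝕊_{δ/2}`
        -- realizing `H(u', y)`
        (∀ (u' : Fin (d + 1) → ℝ) (y : Matrix (Fin d) (Fin d) ℝ), y.IsHermitian →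
          ∃ (f : ℝ) (lmat : Matrix (Fin d) (Fin d) ℝ), |f| ≤ K₀' ∧
            lmat ∈ Sdelta d (δ / 2) ∧
            (Hbar + K + eunorm u') * f + Matrix.trace (lmat * y) = H u' y) →
      ∀ (u' v' : Fin (d + 1) → ℝ), eunorm v' ≤ ε₀ →
      ∀ (z : Fin m → ℝ),
        (∀ (y : Matrix (Fin d) (Fin d) ℝ), y.IsHermitian →
          Gmax d m δ K₀' Hbar K H lam (u' + v') y z ≤
            Gmax d m δ K₀' Hbar K H lam u' y z + N * eunorm v' * (1 + eunorm u' + eunorm z)) ∧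
        |cHinf d m δ K₀' Hbar K H lam (u' + v') z - cHinf d m δ K₀' Hbar K H lam u' z| ≤
          N * eunorm v' * (1 + eunorm u' + eunorm z) := by
  have hδ₀ : 0 < δ := hδ.1
  have hc : 0 ≤ Hbar + K := by linarith
  set C := GmaxLipConst d m δ K₀' Hbar K N' L
  have hC : 0 < C := GmaxLipConst_pos hK hK₀' hHbar hN'.le hδ₀ hL.le
  refine ⟨2 * C, by positivity, 1, one_pos, fun lam hlam H hHa hHb u' v' hv' z => ?_⟩
  have hHv : ∀ w v y, y.IsHermitian → H (w + v) y ≤ H w y + N' * eunorm v := by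
    intro w v y hy
    have := le_of_abs_le (hHa (w + v) w y hy)
    rwa [add_sub_cancel_left, sub_le_iff_le_add'] at this
  have hwit : ∀ y : Matrix (Fin d) (Fin d) ℝ, y.IsHermitian → ∀ u', ∃ (f : ℝ)
      (l : Matrix (Fin d) (Fin d) ℝ), |f| ≤ K₀' ∧ l ∈ Sdelta d (δ / 4) ∧
      (Hbar + K + eunorm u') * f + Matrix.trace (l * y) ≤ H u' y := by
    intro y hy u'
    obtain ⟨f, l, hf, hl, hH⟩ := hHb u' y hy
    exact ⟨f, l, hf, Sdelta_anti (by positivity) (by linarith) hl, hH.le⟩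
  have hG : ∀ w v y, y.IsHermitian → Gmax d m δ K₀' Hbar K H lam (w + v) y z
      ≤ Gmax d m δ K₀' Hbar K H lam w y z + C * eunorm v * (1 + eunorm w + eunorm z) :=
    fun w v y hy =>
      Gmax_add_le hK hK₀' hHbar hN'.le hδ₀ hL.le hlam (hHv w v y hy) (hwit y hy)
  have hcH : ∀ w v, cHinf d m δ K₀' Hbar K H lam (w + v) z
      ≤ cHinf d m δ K₀' Hbar K H lam w z + C * eunorm v * (1 + eunorm w + eunorm z) := by
    intro w v
    refine cHinf_add_le (bddBelow_Gmax hc hδ₀ hL.le hlam fun y hy => ?_) (hG w v)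
    obtain ⟨f, l, hf, hl, hH⟩ := hwit y hy (w + v)
    exact ⟨_, mem_Bset_of_abs_le hf hl hH⟩
  refine ⟨fun y hy => ?_, abs_sub_le_of_forall_add_le (cHinf d m δ K₀' Hbar K H lam · z)
    hC.le (eunorm_nonneg z) hcH u' v' hv'⟩
  have := eunorm_nonneg u'
  have := eunorm_nonneg v'
  have := eunorm_nonneg z
  have : 0 ≤ C * eunorm v' * (1 + eunorm u' + eunorm z) := by positivity
  linarith [hG u' v' y hy]

/-- Lemma 4.1 of Krylov, "An ersatz existence theorem for fully nonlinear
parabolic equations without convexity assumptions" (via the key inequality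
(6.3.3)): local Lipschitz continuity in `u'` of the inf–max construction `cH`. -/
theorem cH_locally_lipschitz (d m : ℕ) (hd : 1 ≤ d) (hm : 1 ≤ m)
    (δ : ℝ) (hδ : δ ∈ Set.Ioo (0:ℝ) 1)
    (K K₀' Hbar N' L : ℝ) (hK : 0 < K) (hK₀' : 0 < K₀') (hHbar : 0 ≤ Hbar)
    (hN' : 0 < N') (hL : 0 < L) :
    ∃ N : ℝ, 0 < N ∧ ∃ ε₀ : ℝ, 0 < ε₀ ∧
      ∀ (lam : Fin m → Matrix (Fin d) (Fin d) ℝ → ℝ),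
        -- the `λ_k` are Lipschitz on `𝕊_{δ/4}` with constant `L`
        (∀ k : Fin m, ∀ a ∈ Sdelta d (δ / 4), ∀ b ∈ Sdelta d (δ / 4),
          |lam k a - lam k b| ≤ L * frobNorm d (a - b)) →
      ∀ (H : (Fin (d + 1) → ℝ) → Matrix (Fin d) (Fin d) ℝ → ℝ),
        -- (a) `H` is Lipschitz in `u'` with constant `N'`
        (∀ (u' v' : Fin (d + 1) → ℝ) (y : Matrix (Fin d) (Fin d) ℝ), y.IsHermitian →
          |H u' y - H v' y| ≤ N' * eunorm (u' - v')) →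
        -- (b) for every `(u', y)` there is `(f,l) ∈ C'' = [−K₀',K₀'] × 𝕊_{δ/2}`
        -- realizing `H(u', y)`
        (∀ (u' : Fin (d + 1) → ℝ) (y : Matrix (Fin d) (Fin d) ℝ), y.IsHermitian →
          ∃ (f : ℝ) (lmat : Matrix (Fin d) (Fin d) ℝ), |f| ≤ K₀' ∧
            lmat ∈ Sdelta d (δ / 2) ∧
            (Hbar + K + eunorm u') * f + Matrix.trace (lmat * y) = H u' y) →
      ∀ (u' v' : Fin (d + 1) → ℝ), eunorm v' ≤ ε₀ →
      ∀ (z : Fin m → ℝ),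
        (∀ (y : Matrix (Fin d) (Fin d) ℝ), y.IsHermitian →
          Gmax d m δ K₀' Hbar K H lam (u' + v') y z ≤
            Gmax d m δ K₀' Hbar K H lam u' y z + N * eunorm v' * (1 + eunorm u' + eunorm z)) ∧
        |cHinf d m δ K₀' Hbar K H lam (u' + v') z - cHinf d m δ K₀' Hbar K H lam u' z| ≤
          N * eunorm v' * (1 + eunorm u' + eunorm z) :=
  cH_locally_lipschitz_general d m δ hδ K K₀' Hbar N' L hK hK₀' hHbar hN' hL
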